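/- arXiv:2112.14291 — 5 statements merged into one kernel-verified Lean document; each statement's English description precedes it below -/
import Mathlib

section
/- For every CMESP-feasible binary vector x (i.e., x ∈ {0,1}ⁿ with 𝟙ᵀx = s and A·x ≤ b) and every DFact-feasible tuple (Θ, υ, ν, π, τ) for (C, s, A, b; F), we have det C[S(x), S(x)] ≤ exp(f(Θ, ν, π, τ)); that is, the objective value of every DFact-feasible tuple is an upper bound on the optimal value of the constrained maximum-entropy sampling problem. -/
open Matrix

/-- The eigenvalues of a real symmetric matrix, sorted in nonincreasing order:
`sortedEigs M 0` is the largest eigenvalue (`λ_1`) and `sortedEigs M (k-1)` the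
smallest (`λ_k`).  For non-Hermitian matrices we return the junk value `0`. -/
noncomputable def sortedEigs {k : ℕ} (M : Matrix (Fin k) (Fin k) ℝ) : Fin k → ℝ :=
  if h : M.IsHermitian then fun i => (h.eigenvalues ∘ Tuple.sort h.eigenvalues) i.rev
  else fun _ => 0

/-- DFact-feasibility of the tuple `(Θ, υ, ν, π, τ)` for the data `(A; F)`:
`Θ ≻ 0`, `υ, ν, π ≥ 0` and `diag(FΘFᵀ) + υ − ν − Aᵀπ − τ𝟙 = 0`. -/
def DFactFeasible {n m k : ℕ} (A : Matrix (Fin m) (Fin n) ℝ) (F : Matrix (Fin n) (Fin k) ℝ)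
    (Θ : Matrix (Fin k) (Fin k) ℝ) (υ ν : Fin n → ℝ) (π : Fin m → ℝ) (τ : ℝ) : Prop :=
  Θ.PosDef ∧ (∀ j, 0 ≤ υ j) ∧ (∀ j, 0 ≤ ν j) ∧ (∀ i, 0 ≤ π i) ∧
    ∀ j, (F * Θ * Fᵀ) j j + υ j - ν j - (∑ i, A i j * π i) - τ = 0

/-- The DFact objective value
`f(Θ, ν, π, τ) = −Σ_{ℓ=k−s+1}^{k} log λ_ℓ(Θ) + νᵀ𝟙 + πᵀb + τ·s − s`. -/
noncomputable def DFactObj {n m k : ℕ} (s : ℕ) (b : Fin m → ℝ)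
    (Θ : Matrix (Fin k) (Fin k) ℝ) (ν : Fin n → ℝ) (π : Fin m → ℝ) (τ : ℝ) : ℝ :=
  -(∑ i : Fin k, if k - s ≤ (i : ℕ) then Real.log (sortedEigs Θ i) else 0)
    + (∑ j, ν j) + (∑ i, π i * b i) + τ * s - s


/-- CMESP-feasibility of a binary vector `x`: `x ∈ {0,1}ⁿ`, `𝟙ᵀx = s` and `Ax ≤ b`. -/
def CMESPFeasible {n m : ℕ} (s : ℕ) (A : Matrix (Fin m) (Fin n) ℝ) (b : Fin m → ℝ)
    (x : Fin n → ℝ) : Prop :=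
  (∀ j, x j = 0 ∨ x j = 1) ∧ (∑ j, x j = (s : ℝ)) ∧ ∀ i, A.mulVec x i ≤ b i

/-- `det C[S(x), S(x)]`: the determinant of the principal submatrix of `C` whose rows and
columns are indexed by the support `S(x) = {j : x j = 1}` of a binary vector `x`. -/
noncomputable def suppDet {n : ℕ} (C : Matrix (Fin n) (Fin n) ℝ) (x : Fin n → ℝ) : ℝ :=
  haveI : DecidablePred (fun j : Fin n => x j = 1) := Classical.decPred _
  (C.submatrix (fun i : {j : Fin n // x j = 1} => (i : Fin n))
    (fun i : {j : Fin n // x j = 1} => (i : Fin n))).det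


open Finset


lemma strictMono_fin_le {s k : ℕ} {g : Fin s → Fin k} (hg : StrictMono g) (i : Fin s) :
    (i : ℕ) ≤ (g i : ℕ) := by
  obtain ⟨v, hv⟩ := i
  induction v with
  | zero => exact Nat.zero_le _
  | succ w ih =>
    have hw : w < s := Nat.lt_of_succ_lt hv
    have h1 : (g ⟨w, hw⟩ : ℕ) < (g ⟨w+1, hv⟩ : ℕ) := hg (by simp [Fin.lt_def])
    have h2 := ih hw
    have e1 : ((⟨w, hw⟩ : Fin s) : ℕ) = w := rfl
    have e2 : ((⟨w+1, hv⟩ : Fin s) : ℕ) = w + 1 := rfl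
    omega

lemma image_orderEmbOfFin {k s : ℕ} (T : Finset (Fin k)) (hT : T.card = s) :
    Finset.image (fun i : Fin s => T.orderEmbOfFin hT i) Finset.univ = T := by
  ext a
  simp only [Finset.mem_image, Finset.mem_univ, true_and]
  constructor
  · rintro ⟨i, rfl⟩; exact Finset.orderEmbOfFin_mem T hT i
  · intro ha
    have : a ∈ Set.range (T.orderEmbOfFin hT) := by
      rw [Finset.range_orderEmbOfFin]; exact ha
    exact this

lemma prod_smallest_le {k s : ℕ} (hsk : s ≤ k) (e : Fin k → ℝ) (he : Monotone e)
    (hpos : ∀ i, 0 < e i) (T : Finset (Fin k)) (hT : T.card = s) :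
    ∏ i ∈ univ.filter (fun i : Fin k => (i : ℕ) < s), e i ≤ ∏ j ∈ T, e j := by
  have h1 : ∏ j ∈ T, e j = ∏ i : Fin s, e (T.orderEmbOfFin hT i) := by
    have := Finset.prod_image (f := e) (g := fun i : Fin s => T.orderEmbOfFin hT i)
      (s := Finset.univ) (by intro a _ b _ h; exact (T.orderEmbOfFin hT).injective h)
    rw [image_orderEmbOfFin T hT] at this
    exact this
  have himg : Finset.image (fun i : Fin s => Fin.castLE hsk i) Finset.univ
      = univ.filter (fun i : Fin k => (i : ℕ) < s) := by
    ext a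
    simp only [Finset.mem_image, Finset.mem_univ, true_and, Finset.mem_filter]
    constructor
    · rintro ⟨i, rfl⟩; exact i.2
    · intro ha; exact ⟨⟨(a : ℕ), ha⟩, by ext; simp⟩
  have h2 : ∏ i ∈ univ.filter (fun i : Fin k => (i : ℕ) < s), e i
      = ∏ i : Fin s, e (Fin.castLE hsk i) := by
    have := Finset.prod_image (f := e) (g := fun i : Fin s => Fin.castLE hsk i)
      (s := Finset.univ) (by intro a _ b _ h; exact Fin.castLE_injective hsk h)
    rw [himg] at this
    exact this
  rw [h1, h2]
  apply Finset.prod_le_prod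
  · intro i _; exact (hpos _).le
  · intro i _
    apply he
    rw [Fin.le_def]
    simpa using strictMono_fin_le (T.orderEmbOfFin hT).strictMono i


variable {ι : Type*} [Fintype ι] [DecidableEq ι] {k : ℕ}

noncomputable def cbW (H : Matrix ι (Fin k) ℝ) (f : ι → Fin k) : ℝ :=
  (∏ i, H i (f i)) * Matrix.det (Matrix.of fun i l => H l (f i))

lemma cb_expand (H : Matrix ι (Fin k) ℝ) (d : Fin k → ℝ) :
    (H * Matrix.diagonal d * Hᵀ).det
      = ∑ f : ι → Fin k, (∏ i, d (f i)) * cbW H f := by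
  have hM : (H * Matrix.diagonal d * Hᵀ) =
      Matrix.of (fun i => ∑ j : Fin k, (d j * H i j) • (fun l => H l j)) := by
    ext i l
    rw [Matrix.mul_apply]
    simp only [Matrix.mul_diagonal, Matrix.transpose_apply, Matrix.of_apply,
      Finset.sum_apply, Pi.smul_apply, smul_eq_mul]
    apply Finset.sum_congr rfl
    intro j _
    ring
  rw [hM]
  have : Matrix.det (Matrix.of (fun i => ∑ j : Fin k, (d j * H i j) • (fun l => H l j)))
      = (Matrix.detRowAlternating : (ι → ℝ) [⋀^ι]→ₗ[ℝ] ℝ).toMultilinearMap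
          (fun i => ∑ j : Fin k, (d j * H i j) • (fun l => H l j)) := rfl
  rw [this, MultilinearMap.map_sum]
  apply Finset.sum_congr rfl
  intro f _
  have h2 : (Matrix.detRowAlternating : (ι → ℝ) [⋀^ι]→ₗ[ℝ] ℝ).toMultilinearMap
      (fun i => (d (f i) * H i (f i)) • (fun l => H l (f i)))
      = (∏ i, (d (f i) * H i (f i))) •
        (Matrix.detRowAlternating : (ι → ℝ) [⋀^ι]→ₗ[ℝ] ℝ).toMultilinearMap
          (fun i => (fun l => H l (f i))) :=
    MultilinearMap.map_smul_univ _ _ _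
  rw [h2]
  have h3 : (Matrix.detRowAlternating : (ι → ℝ) [⋀^ι]→ₗ[ℝ] ℝ).toMultilinearMap
      (fun i => (fun l => H l (f i))) = Matrix.det (Matrix.of fun i l => H l (f i)) := rfl
  rw [h3, cbW, Finset.prod_mul_distrib]
  simp [mul_assoc, smul_eq_mul]

lemma cbW_eq_zero_of_not_injective (H : Matrix ι (Fin k) ℝ) {f : ι → Fin k}
    (hf : ¬ Function.Injective f) : cbW H f = 0 := by
  rw [Function.not_injective_iff] at hf
  obtain ⟨a, b, hab, hne⟩ := hf
  have hdet : Matrix.det (Matrix.of fun i l => H l (f i)) = 0 :=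
    Matrix.det_zero_of_row_eq hne (by funext l; simp [hab])
  simp [cbW, hdet]

lemma cb_fiber_sq (H : Matrix ι (Fin k) ℝ) (T : Finset (Fin k))
    (hT : T.card = Fintype.card ι) :
    0 ≤ ∑ f ∈ (univ : Finset (ι → Fin k)).filter (fun f => univ.image f = T), cbW H f := by
  classical
  set c : ι → Fin k := fun i => T.orderEmbOfFin hT ((Fintype.equivFin ι) i) with hc
  have hcinj : Function.Injective c :=
    (T.orderEmbOfFin hT).injective.comp (Fintype.equivFin ι).injective
  have hcimg : Finset.image c univ = T := by
    have h1 : Finset.image c univ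
        = Finset.image (fun i : Fin (Fintype.card ι) => T.orderEmbOfFin hT i)
            (Finset.image (Fintype.equivFin ι) univ) := by
      rw [Finset.image_image]; rfl
    rw [h1, Finset.image_univ_equiv, image_orderEmbOfFin]
  have hcardT : Fintype.card {a // a ∈ T} = Fintype.card ι := by
    rw [Fintype.card_coe, hT]
  set eC : ι → {a // a ∈ T} := fun i => ⟨c i, hcimg ▸ Finset.mem_image_of_mem c (mem_univ i)⟩
    with heC
  have heCbij : Function.Bijective eC := by
    rw [Fintype.bijective_iff_injective_and_card]
    exact ⟨fun a b hab => hcinj (congrArg Subtype.val hab), hcardT.symm⟩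
  set P : Matrix ι ι ℝ := Matrix.of fun a b => H b (c a) with hP
  have key : ∑ f ∈ (univ : Finset (ι → Fin k)).filter (fun f => univ.image f = T), cbW H f
      = ∑ σ : Equiv.Perm ι, cbW H (c ∘ σ) := by
    refine (Finset.sum_bij (fun (σ : Equiv.Perm ι) _ => c ∘ σ) ?_ ?_ ?_ ?_).symm
    · intro σ _
      simp only [Finset.mem_filter, Finset.mem_univ, true_and]
      have : Finset.image (c ∘ σ) univ = Finset.image c (Finset.image σ univ) := by
        rw [Finset.image_image]
      rw [this, Finset.image_univ_equiv, hcimg]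
    · intro σ1 _ σ2 _ h
      ext i
      exact hcinj (congrFun h i)
    · intro f hf
      simp only [Finset.mem_filter, Finset.mem_univ, true_and] at hf
      have hfinj : Function.Injective f := by
        have : Set.InjOn f (univ : Finset ι) := by
          apply Finset.injOn_of_card_image_eq
          rw [hf, hT, Finset.card_univ]
        rw [Finset.coe_univ] at this
        exact fun a b hab => this (Set.mem_univ a) (Set.mem_univ b) hab
      set eF : ι → {a // a ∈ T} := fun i => ⟨f i, hf ▸ Finset.mem_image_of_mem f (mem_univ i)⟩
        with heF
      have heFbij : Function.Bijective eF := by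
        rw [Fintype.bijective_iff_injective_and_card]
        exact ⟨fun a b hab => hfinj (congrArg Subtype.val hab), hcardT.symm⟩
      refine ⟨(Equiv.ofBijective eF heFbij).trans (Equiv.ofBijective eC heCbij).symm,
        Finset.mem_univ _, ?_⟩
      funext i
      simp only [Function.comp_apply, Equiv.trans_apply]
      have : eC ((Equiv.ofBijective eC heCbij).symm (Equiv.ofBijective eF heFbij i))
          = Equiv.ofBijective eF heFbij i := (Equiv.ofBijective eC heCbij).apply_symm_apply _
      have h2 := congrArg Subtype.val this
      exact h2
    · intro σ _; rfl
  rw [key]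
  have hval : ∀ σ : Equiv.Perm ι,
      cbW H (c ∘ σ) = Matrix.det P * (((Equiv.Perm.sign σ : ℤ) : ℝ) * ∏ i, P (σ i) i) := by
    intro σ
    rw [cbW]
    have h1 : (Matrix.of fun i l => H l ((c ∘ σ) i)) = P.submatrix σ id := rfl
    have h2 : (∏ i, H i ((c ∘ σ) i)) = ∏ i, P (σ i) i := rfl
    rw [h1, h2, Matrix.det_permute]
    push_cast
    ring
  calc (0:ℝ) ≤ Matrix.det P * Matrix.det P := mul_self_nonneg _
    _ = ∑ σ : Equiv.Perm ι, cbW H (c ∘ σ) := by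
        rw [Finset.sum_congr rfl (fun σ _ => hval σ), ← Finset.mul_sum,
          ← Matrix.det_apply' P]

lemma cb_key (H : Matrix ι (Fin k) ℝ) (d : Fin k → ℝ) (μ : ℝ) (hμ : 0 ≤ μ)
    (hμd : ∀ T : Finset (Fin k), T.card = Fintype.card ι → μ ≤ ∏ j ∈ T, d j) :
    μ * (H * Hᵀ).det ≤ (H * Matrix.diagonal d * Hᵀ).det := by
  classical
  have hone : (H * Hᵀ).det = ∑ f : ι → Fin k, (∏ _i : ι, (1:ℝ)) * cbW H f := by
    have := cb_expand H (fun _ => (1:ℝ))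
    rw [Matrix.diagonal_one] at this
    rw [show H * Hᵀ = H * (1 : Matrix (Fin k) (Fin k) ℝ) * Hᵀ by rw [Matrix.mul_one]]
    exact this
  rw [hone, cb_expand H d, Finset.mul_sum]
  rw [← Finset.sum_fiberwise (g := fun f : ι → Fin k => Finset.image f univ)
    (f := fun f => μ * ((∏ _i : ι, (1:ℝ)) * cbW H f)),
    ← Finset.sum_fiberwise (g := fun f : ι → Fin k => Finset.image f univ)
    (f := fun f => (∏ i, d (f i)) * cbW H f)]
  apply Finset.sum_le_sum
  intro T _
  by_cases hT : T.card = Fintype.card ι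
  · -- all f in fiber are injective
    have hfib : ∀ f ∈ (univ : Finset (ι → Fin k)).filter (fun f => univ.image f = T),
        Function.Injective f := by
      intro f hf
      simp only [Finset.mem_filter, Finset.mem_univ, true_and] at hf
      have : Set.InjOn f (univ : Finset ι) := by
        apply Finset.injOn_of_card_image_eq
        rw [hf, hT, Finset.card_univ]
      rw [Finset.coe_univ] at this
      exact fun a b hab => this (Set.mem_univ a) (Set.mem_univ b) hab
    have hprod : ∀ f ∈ (univ : Finset (ι → Fin k)).filter (fun f => univ.image f = T),
        (∏ i, d (f i)) = ∏ j ∈ T, d j := by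
      intro f hf
      have hinj := hfib f hf
      simp only [Finset.mem_filter, Finset.mem_univ, true_and] at hf
      rw [← hf, Finset.prod_image (fun a _ b _ hab => hinj hab)]
    calc ∑ f ∈ (univ : Finset (ι → Fin k)).filter (fun f => univ.image f = T),
          μ * ((∏ _i : ι, (1:ℝ)) * cbW H f)
        = μ * ∑ f ∈ (univ : Finset (ι → Fin k)).filter (fun f => univ.image f = T), cbW H f := by
          rw [Finset.mul_sum]; apply Finset.sum_congr rfl; intro f _; simp
      _ ≤ (∏ j ∈ T, d j) * ∑ f ∈ (univ : Finset (ι → Fin k)).filter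
            (fun f => univ.image f = T), cbW H f :=
          mul_le_mul_of_nonneg_right (hμd T hT) (cb_fiber_sq H T hT)
      _ = ∑ f ∈ (univ : Finset (ι → Fin k)).filter (fun f => univ.image f = T),
            (∏ i, d (f i)) * cbW H f := by
          rw [Finset.mul_sum]; exact (Finset.sum_congr rfl
            (fun f hf => by rw [hprod f hf])).symm
  · -- all f in fiber are non-injective, cbW = 0
    have hz : ∀ f ∈ (univ : Finset (ι → Fin k)).filter (fun f => univ.image f = T),
        cbW H f = 0 := by
      intro f hf
      simp only [Finset.mem_filter, Finset.mem_univ, true_and] at hf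
      apply cbW_eq_zero_of_not_injective
      intro hinj
      apply hT
      rw [← hf, Finset.card_image_of_injective _ hinj, Finset.card_univ]
    rw [Finset.sum_congr rfl (fun f hf =>
        show μ * ((∏ _i : ι, (1:ℝ)) * cbW H f) = 0 by rw [hz f hf, mul_zero, mul_zero]),
      Finset.sum_congr rfl (fun f hf =>
        show (∏ i, d (f i)) * cbW H f = 0 by rw [hz f hf, mul_zero])]


lemma trace_eq_sum_eigs {ι : Type*} [Fintype ι] [DecidableEq ι] {M : Matrix ι ι ℝ}
    (hM : M.IsHermitian) : M.trace = ∑ i, hM.eigenvalues i := by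
  have hU := hM.spectral_theorem
  set U : Matrix ι ι ℝ := (hM.eigenvectorUnitary : Matrix ι ι ℝ) with hUdef
  have h1 : M.trace = (U * Matrix.diagonal (RCLike.ofReal ∘ hM.eigenvalues) * (star U)).trace := by
    exact congrArg Matrix.trace hU
  rw [h1, Matrix.trace_mul_cycle]
  have h2 : star U * U = 1 := by
    have := hM.eigenvectorUnitary.2
    rw [Unitary.mem_iff] at this
    exact this.1
  rw [h2, Matrix.one_mul, Matrix.trace_diagonal]
  rfl

lemma det_le_exp_trace {ι : Type*} [Fintype ι] [DecidableEq ι] {M : Matrix ι ι ℝ}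
    (hM : M.PosSemidef) : M.det ≤ Real.exp (M.trace - Fintype.card ι) := by
  have hH : M.IsHermitian := hM.1
  have hdet : M.det = ∏ i, hH.eigenvalues i := by
    have := hH.det_eq_prod_eigenvalues
    simpa using this
  rw [hdet, trace_eq_sum_eigs hH]
  have hle : ∏ i, hH.eigenvalues i ≤ ∏ i, Real.exp (hH.eigenvalues i - 1) := by
    apply Finset.prod_le_prod
    · intro i _; exact hM.eigenvalues_nonneg i
    · intro i _
      have := Real.add_one_le_exp (hH.eigenvalues i - 1)
      linarith
  refine hle.trans ?_
  rw [← Real.exp_sum]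
  apply le_of_eq
  congr 1
  rw [Finset.sum_sub_distrib]
  simp [Finset.card_univ]

theorem stmt_4 {n m s k : ℕ} (hn : 0 < n) (hm : 0 < m) (hs : 0 < s) (hsk : s ≤ k)
    (C : Matrix (Fin n) (Fin n) ℝ) (hC : C.PosSemidef)
    (F : Matrix (Fin n) (Fin k) ℝ) (hCF : C = F * Fᵀ)
    (A : Matrix (Fin m) (Fin n) ℝ) (b : Fin m → ℝ)
    (x : Fin n → ℝ) (hx : CMESPFeasible s A b x)
    (Θ : Matrix (Fin k) (Fin k) ℝ) (υ ν : Fin n → ℝ) (π : Fin m → ℝ) (τ : ℝ)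
    (hfeas : DFactFeasible A F Θ υ ν π τ) :
    suppDet C x ≤ Real.exp (DFactObj s b Θ ν π τ) := by
  classical
  obtain ⟨hx01, hxsum, hAx⟩ := hx
  obtain ⟨hPD, hυ, hν, hπ, heq⟩ := hfeas
  letI instDec : DecidablePred (fun j : Fin n => x j = 1) := Classical.decPred _
  set S := {j : Fin n // x j = 1}
  set c : S → Fin n := fun a => (a : Fin n) with hcdef
  -- cardinality of the support
  have hfiltcard : (univ.filter (fun j : Fin n => x j = 1)).card = s := by
    have h1 : ∑ j, x j = ∑ j, (if x j = 1 then (1:ℝ) else 0) := by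
      apply Finset.sum_congr rfl
      intro j _
      rcases hx01 j with h | h
      · simp [h]
      · simp [h]
    rw [h1, Finset.sum_boole] at hxsum
    exact_mod_cast hxsum
  have hcardS : Fintype.card S = s := by
    rw [Fintype.card_subtype]
    exact hfiltcard
  -- the sub-factor
  set G : Matrix S (Fin k) ℝ := F.submatrix c id with hGdef
  have hGG : G * Gᵀ = C.submatrix c c := by
    ext a bb
    rw [hCF]
    simp [hGdef, Matrix.mul_apply]
  have hGTG : G * Θ * Gᵀ = (F * Θ * Fᵀ).submatrix c c := by
    ext a bb
    simp only [Matrix.mul_apply, Matrix.submatrix_apply, Matrix.transpose_apply,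
      hGdef, Matrix.submatrix_apply, id_eq]
  -- spectral decomposition of Θ
  have hherm : Θ.IsHermitian := hPD.1
  set d : Fin k → ℝ := hherm.eigenvalues with hddef
  have hdpos : ∀ i, 0 < d i := fun i => hPD.eigenvalues_pos i
  set U : Matrix (Fin k) (Fin k) ℝ := (hherm.eigenvectorUnitary : Matrix (Fin k) (Fin k) ℝ)
    with hUdef
  have hspec : Θ = U * Matrix.diagonal d * star U := by
    have h0 := hherm.spectral_theorem
    have h1 : RCLike.ofReal ∘ hherm.eigenvalues = d := by
      rw [RCLike.ofReal_real_eq_id]; rfl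
    rw [h1] at h0
    exact h0
  have hstarU : star U = Uᵀ := by
    rw [Matrix.star_eq_conjTranspose, Matrix.conjTranspose_eq_transpose_of_trivial]
  set H : Matrix S (Fin k) ℝ := G * U with hHdef
  have hUU : U * Uᵀ = 1 := by
    have h2 := hherm.eigenvectorUnitary.2
    rw [Unitary.mem_iff] at h2
    rw [← hstarU]
    exact h2.2
  have hHH : H * Hᵀ = G * Gᵀ := by
    rw [hHdef, Matrix.transpose_mul, ← Matrix.mul_assoc, Matrix.mul_assoc G U Uᵀ, hUU,
      Matrix.mul_one]
  have hHDH : H * Matrix.diagonal d * Hᵀ = G * Θ * Gᵀ := by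
    rw [hspec, hstarU, hHdef, Matrix.transpose_mul]
    simp only [Matrix.mul_assoc]
  -- the product of the s smallest eigenvalues
  set e : Fin k → ℝ := fun i => d (Tuple.sort d i) with hedef
  have hemono : Monotone e := Tuple.monotone_sort d
  have hepos : ∀ i, 0 < e i := fun i => hdpos _
  set μ := ∏ i ∈ univ.filter (fun i : Fin k => (i : ℕ) < s), e i with hμdef
  have hμpos : 0 < μ := Finset.prod_pos (fun i _ => hepos i)
  have hμd : ∀ T : Finset (Fin k), T.card = Fintype.card S → μ ≤ ∏ j ∈ T, d j := by
    intro T hT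
    rw [hcardS] at hT
    have himg : ∏ j ∈ T.image (Tuple.sort d).symm, e j = ∏ j ∈ T, d j := by
      rw [Finset.prod_image (fun a _ b _ hab => (Tuple.sort d).symm.injective hab)]
      apply Finset.prod_congr rfl
      intro j _
      rw [hedef]
      simp
    rw [← himg]
    exact prod_smallest_le hsk e hemono hepos _
      (by rw [Finset.card_image_of_injective _ (Tuple.sort d).symm.injective, hT])
  have h1 : μ * (C.submatrix c c).det ≤ ((F * Θ * Fᵀ).submatrix c c).det := by
    have := cb_key H d μ hμpos.le hμd
    rwa [hHH, hGG, hHDH, hGTG] at this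
  -- determinant vs trace
  have hpsd : ((F * Θ * Fᵀ).submatrix c c).PosSemidef := by
    have hp : (G * Θ * Gᵀ).PosSemidef := by
      have := hPD.posSemidef.mul_mul_conjTranspose_same (B := G)
      rwa [Matrix.conjTranspose_eq_transpose_of_trivial] at this
    rwa [hGTG] at hp
  have h2 : ((F * Θ * Fᵀ).submatrix c c).det
      ≤ Real.exp (((F * Θ * Fᵀ).submatrix c c).trace - s) := by
    have := det_le_exp_trace hpsd
    rwa [hcardS] at this
  -- trace bound
  have hsub : ∀ g : Fin n → ℝ, ∑ a : S, g (c a) = ∑ j ∈ univ.filter (fun j => x j = 1), g j := by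
    intro g
    exact (Finset.sum_subtype _ (by intro j; simp) g).symm
  have hAsum : ∀ i, ∑ a : S, A i (c a) = A.mulVec x i := by
    intro i
    rw [hsub (fun j => A i j), Matrix.mulVec, dotProduct, Finset.sum_filter]
    apply Finset.sum_congr rfl
    intro j _
    rcases hx01 j with h | h
    · simp [h]
    · simp [h]
  have htr : ((F * Θ * Fᵀ).submatrix c c).trace ≤ (∑ j, ν j) + (∑ i, π i * b i) + τ * s := by
    have htr1 : ((F * Θ * Fᵀ).submatrix c c).trace = ∑ a : S, (F * Θ * Fᵀ) (c a) (c a) := by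
      simp [Matrix.trace, Matrix.diag]
    have hdiag : ∀ j : Fin n, (F * Θ * Fᵀ) j j = ν j - υ j + (∑ i, A i j * π i) + τ := by
      intro j
      have := heq j
      linarith
    rw [htr1, Finset.sum_congr rfl (fun (a : S) _ => hdiag (c a))]
    have hsplit : ∑ a : S, (ν (c a) - υ (c a) + (∑ i, A i (c a) * π i) + τ)
        = (∑ a : S, ν (c a)) - (∑ a : S, υ (c a))
          + (∑ a : S, ∑ i, A i (c a) * π i) + (∑ _a : S, τ) := by
      rw [Finset.sum_add_distrib, Finset.sum_add_distrib, Finset.sum_sub_distrib]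
    rw [hsplit]
    have hb1 : ∑ a : S, ν (c a) ≤ ∑ j, ν j := by
      rw [hsub ν]
      exact Finset.sum_le_sum_of_subset_of_nonneg (Finset.filter_subset _ _)
        (fun j _ _ => hν j)
    have hb2 : 0 ≤ ∑ a : S, υ (c a) := Finset.sum_nonneg (fun a _ => hυ (c a))
    have hb3 : ∑ a : S, ∑ i, A i (c a) * π i ≤ ∑ i, π i * b i := by
      rw [Finset.sum_comm]
      apply Finset.sum_le_sum
      intro i _
      have : ∑ a : S, A i (c a) * π i = (A.mulVec x i) * π i := by
        rw [← Finset.sum_mul, hAsum i]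
      rw [this]
      calc (A.mulVec x i) * π i ≤ b i * π i :=
            mul_le_mul_of_nonneg_right (hAx i) (hπ i)
        _ = π i * b i := mul_comm _ _
    have hb4 : (∑ _a : S, τ) = τ * s := by
      rw [Finset.sum_const, nsmul_eq_mul, Finset.card_univ, hcardS, mul_comm]
    rw [hb4]
    linarith
  -- objective value
  have hS0 : (∑ i : Fin k, if k - s ≤ (i : ℕ) then Real.log (sortedEigs Θ i) else 0)
      = Real.log μ := by
    have hse : sortedEigs Θ = fun i => e i.rev := by
      rw [sortedEigs, dif_pos hherm]
      rfl
    rw [hse]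
    have hre : (∑ i : Fin k, if k - s ≤ (i : ℕ) then Real.log (e i.rev) else 0)
        = ∑ i : Fin k, if (i : ℕ) < s then Real.log (e i) else 0 := by
      apply Fintype.sum_equiv Fin.revPerm
      intro i
      have hik := i.isLt
      rw [Fin.revPerm_apply]
      have h2 := Fin.val_rev i
      by_cases hcond : k - s ≤ (i : ℕ)
      · rw [if_pos hcond, if_pos (by omega)]
      · rw [if_neg hcond, if_neg (by omega)]
    rw [hre, ← Finset.sum_filter, hμdef,
      Real.log_prod (fun i _ => (hepos i).ne')]
  have hgoal1 : suppDet C x = (C.submatrix c c).det := by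
    simp only [suppDet]
    rfl
  have hfinal : (C.submatrix c c).det
      ≤ μ⁻¹ * Real.exp ((∑ j, ν j) + (∑ i, π i * b i) + τ * s - s) := by
    rw [inv_mul_eq_div, le_div_iff₀ hμpos]
    calc (C.submatrix c c).det * μ = μ * (C.submatrix c c).det := mul_comm _ _
      _ ≤ ((F * Θ * Fᵀ).submatrix c c).det := h1
      _ ≤ Real.exp (((F * Θ * Fᵀ).submatrix c c).trace - s) := h2
      _ ≤ Real.exp ((∑ j, ν j) + (∑ i, π i * b i) + τ * s - s) :=
          Real.exp_le_exp.2 (by linarith)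
  have hobj : DFactObj s b Θ ν π τ
      = -Real.log μ + ((∑ j, ν j) + (∑ i, π i * b i) + τ * s - s) := by
    rw [DFactObj, hS0]
    ring
  rw [hgoal1, hobj, Real.exp_add, Real.exp_neg, Real.exp_log hμpos]
  exact hfinal
end

section
/- Let λ ∈ ℝᵏ satisfy λ_1 ≥ λ_2 ≥ ⋯ ≥ λ_k ≥ 0, and let s be an integer with 0 < s ≤ k. Then there exists a unique integer ι with 0 ≤ ι < s such that (ι = 0 or λ_ι > (1/(s−ι))·Σ_{ℓ=ι+1}^{k} λ_ℓ) and (1/(s−ι))·Σ_{ℓ=ι+1}^{k} λ_ℓ ≥ λ_{ι+1}. -/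
/-!
Write `A j` for the average `(1/(s−j))·Σ_{ℓ>j} λ_ℓ` and `P j` for `λ_{j+1} ≤ A j`. Peeling `λ_{j+1}`
off the tail sum shows `A (j+1) < λ_{j+1} ↔ A j < λ_{j+1}`, so the first condition at `ι > 0` says
exactly `¬ P (ι−1)`. The same identity and monotonicity of `λ` make `P` upward closed on `[0, s)`,
and nonnegativity gives `P (s−1)`. Hence `ι` is forced to be the least index where `P` holds.
-/

open Finset

theorem existsUnique_least_of_upwardClosed {p q : ℕ → Prop} {s : ℕ} (hs : 0 < s)
    (hup : ∀ j, j + 1 < s → p j → p (j + 1)) (hlast : p (s - 1))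
    (hq : ∀ j, j + 1 < s → (q (j + 1) ↔ ¬ p j)) :
    ∃! ι, ι < s ∧ (ι = 0 ∨ q ι) ∧ p ι := by
  classical
  have hp_of_le : ∀ i j, p i → i ≤ j → j < s → p j := by
    intro i j hi hij
    induction j, hij using Nat.le_induction with
    | base => exact fun _ => hi
    | succ j _ ih => exact fun hj => hup j hj (ih (by omega))
  have hex : ∃ j, p j := ⟨s - 1, hlast⟩
  have hfind_lt : Nat.find hex < s := by
    have := Nat.find_min' hex hlast
    omega
  refine ⟨Nat.find hex, ⟨hfind_lt, ?_, Nat.find_spec hex⟩, ?_⟩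
  · rcases Nat.eq_zero_or_eq_succ_pred (Nat.find hex) with h0 | hsucc
    · exact Or.inl h0
    · right
      rw [hsucc, hq _ (by omega)]
      exact Nat.find_min hex (by omega)
  · rintro y ⟨hys, hyq, hyp⟩
    have hle := Nat.find_min' hex hyp
    rcases hyq with rfl | hyq
    · omega
    by_contra hne
    obtain ⟨j, rfl⟩ : ∃ j, y = j + 1 := ⟨y - 1, by omega⟩
    exact (hq j hys).1 hyq (hp_of_le _ _ (Nat.find_spec hex) (by omega) (by omega))

theorem div_sub_one_lt_iff_add_div_lt {α : Type*} [Field α] [LinearOrder α] [IsStrictOrderedRing α]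
    {a t c : α} (hc : 1 < c) :
    t / (c - 1) < a ↔ (a + t) / c < a := by
  rw [div_lt_iff₀ (by linarith), div_lt_iff₀ (by linarith)]
  constructor <;> intro h <;> linarith

section TailAverage

variable (k s : ℕ) (lam : ℕ → ℝ)

noncomputable def tailAverage (j : ℕ) : ℝ :=
  (1 / ((s : ℝ) - j)) * (∑ ℓ ∈ Icc (j + 1) k, lam ℓ)

variable {k s}

theorem tailAverage_succ_lt_iff {j : ℕ} (hjs : j + 1 < s) (hjk : j + 1 ≤ k) :
    tailAverage k s lam (j + 1) < lam (j + 1) ↔ tailAverage k s lam j < lam (j + 1) := by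
  have hsplit : ∑ ℓ ∈ Icc (j + 1) k, lam ℓ = lam (j + 1) + ∑ ℓ ∈ Icc (j + 1 + 1) k, lam ℓ := by
    rw [Icc_add_one_left_eq_Ioc (j + 1), add_sum_Ioc_eq_sum_Icc hjk]
  have hc : (1 : ℝ) < s - j := by
    have : ((j + 1 : ℕ) : ℝ) < s := by exact_mod_cast hjs
    push_cast at this
    linarith
  unfold tailAverage
  rw [hsplit, one_div_mul_eq_div, one_div_mul_eq_div, Nat.cast_add_one, ← sub_sub]
  exact div_sub_one_lt_iff_add_div_lt hc

theorem le_tailAverage_succ_of_le (hmono : ∀ i, 1 ≤ i → i < k → lam (i + 1) ≤ lam i)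
    {j : ℕ} (hjs : j + 1 < s) (hsk : s ≤ k) (hj : lam (j + 1) ≤ tailAverage k s lam j) :
    lam (j + 1 + 1) ≤ tailAverage k s lam (j + 1) := by
  have hstep : lam (j + 1) ≤ tailAverage k s lam (j + 1) :=
    not_lt.1 <| (tailAverage_succ_lt_iff lam hjs (by omega)).not.2 (not_lt.2 hj)
  exact (hmono (j + 1) (by omega) (by omega)).trans hstep

theorem le_tailAverage_pred (hs : 0 < s) (hsk : s ≤ k)
    (hnonneg : ∀ i, s < i → i ≤ k → 0 ≤ lam i) :
    lam s ≤ tailAverage k s lam (s - 1) := by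
  have hsum : lam s ≤ ∑ ℓ ∈ Icc s k, lam ℓ := by
    rw [← add_sum_Ioc_eq_sum_Icc hsk, le_add_iff_nonneg_right]
    exact sum_nonneg fun i hi => hnonneg i (mem_Ioc.1 hi).1 (mem_Ioc.1 hi).2
  unfold tailAverage
  rw [Nat.cast_pred hs, sub_sub_cancel, div_one, one_mul, Nat.sub_add_cancel hs]
  exact hsum

end TailAverage

/-- Lemma 13 of Nikolov: for a nonincreasing vector `λ_1 ≥ ⋯ ≥ λ_k ≥ 0` (indexed `1,…,k`)
and an integer `0 < s ≤ k`, there is a unique integer `0 ≤ ι < s` with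
`λ_ι > (1/(s−ι))·Σ_{ℓ=ι+1}^{k} λ_ℓ ≥ λ_{ι+1}` (convention `λ_0 = +∞`, encoded by the
disjunct `ι = 0`). -/
theorem stmt_7 (k s : ℕ) (lam : ℕ → ℝ) (hs : 0 < s) (hsk : s ≤ k)
    (hmono : ∀ i, 1 ≤ i → i < k → lam (i + 1) ≤ lam i)
    (hnonneg : ∀ i, 1 ≤ i → i ≤ k → 0 ≤ lam i) :
    ∃! ι : ℕ, ι < s ∧
      (ι = 0 ∨
        (1 / ((s : ℝ) - ι)) * (∑ ℓ ∈ Finset.Icc (ι + 1) k, lam ℓ) < lam ι) ∧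
      lam (ι + 1) ≤ (1 / ((s : ℝ) - ι)) * (∑ ℓ ∈ Finset.Icc (ι + 1) k, lam ℓ) :=
  existsUnique_least_of_upwardClosed (p := fun j => lam (j + 1) ≤ tailAverage k s lam j)
    (q := fun j => tailAverage k s lam j < lam j) hs
    (fun _ hj => le_tailAverage_succ_of_le lam hmono hj hsk)
    (by simpa only [Nat.sub_add_cancel hs] using
      le_tailAverage_pred lam hs hsk fun i hi hik => hnonneg i (by omega) hik)
    (fun _ hj => (tailAverage_succ_lt_iff lam hj (by omega)).trans not_le.symm)
end

section
/- Let C be an n×n real symmetric positive definite matrix, let 1 ≤ s ≤ n, let A be any m×n real matrix and b ∈ ℝᵐ, and let C^{1/2} denote the symmetric positive semidefinite square root of C. Then the tuple (Θ, υ, ν, π, τ) := (C⁻¹, 0, 0, 0, 1) is DFact-feasible for (C, s, A, b; C^{1/2}) (with k = n), and its objective value equals the spectral bound: −Σ_{ℓ=n−s+1}^{n} log λ_ℓ(C⁻¹) = Σ_{ℓ=1}^{s} log λ_ℓ(C). -/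
open Matrix

/-- The square root of a positive semidefinite matrix, as defined in Mathlib of December 2024
(`Matrix.PosSemidef.sqrt`, since removed from Mathlib). -/
noncomputable def Matrix.PosSemidef.sqrt {n : Type*} [Fintype n] [DecidableEq n]
    {A : Matrix n n ℝ} (hA : A.PosSemidef) : Matrix n n ℝ :=
  hA.1.eigenvectorUnitary.1 * diagonal ((↑) ∘ (√·) ∘ hA.1.eigenvalues) *
    (star hA.1.eigenvectorUnitary : Matrix n n ℝ)

/-!
Both `C^{1/2}` and `C⁻¹` are functions of `C` in the sense of the continuous functional calculus,
so `C^{1/2} C⁻¹ C^{1/2}` is the function `√λ · λ⁻¹ · √λ = 1` of `C`; this gives feasibility, and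
with `ν = π = 0`, `τ = 1` the objective reduces to its log-eigenvalue term. The characteristic
polynomial of `C⁻¹` has the reciprocals `λᵢ⁻¹` as roots, and inversion reverses their order on
`(0, ∞)`, so the `s` smallest eigenvalues of `C⁻¹` are the inverses of the `s` largest of `C`.
-/

open Matrix Finset Polynomial

theorem Tuple.comp_sort_rev_eq_of_antitone {k : ℕ} {α : Type*} [LinearOrder α]
    {f g : Fin k → α} (hf : Antitone f)
    (h : Multiset.map g univ.val = Multiset.map f univ.val) :
    (fun i => (g ∘ Tuple.sort g) i.rev) = f := by
  have hperm : (List.ofFn g).Perm (List.ofFn f) := by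
    rw [← Multiset.coe_eq_coe]
    simpa [List.ofFn_eq_map, Fin.univ_def] using h
  have hsorted : g ∘ Tuple.sort g = f ∘ Fin.rev :=
    List.ofFn_injective <| List.Perm.eq_of_sortedLE (Tuple.monotone_sort g).sortedLE_ofFn
      (hf.comp Fin.rev_anti).sortedLE_ofFn <|
      ((Tuple.sort g).ofFn_comp_perm g).trans <| hperm.trans (Fin.revPerm.ofFn_comp_perm f).symm
  funext i
  exact (congrFun hsorted i.rev).trans (congrArg f i.rev_rev)

namespace Matrix

theorem IsHermitian.map_eigenvalues_eq_map_cfc {𝕜 : Type*} [RCLike 𝕜] {n : Type*} [Fintype n]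
    [DecidableEq n] {A B : Matrix n n 𝕜} (hA : A.IsHermitian) (hB : B.IsHermitian) {f : ℝ → ℝ}
    (hBA : B = cfc f A) :
    Multiset.map hB.eigenvalues univ.val = Multiset.map (f ∘ hA.eigenvalues) univ.val := by
  subst hBA
  have hroots := hB.roots_charpoly_eq_eigenvalues
  rw [hA.charpoly_cfc_eq f, prod_eq_multiset_prod] at hroots
  have hprod := roots_multiset_prod_X_sub_C (univ.val.map fun i => (f (hA.eigenvalues i) : 𝕜))
  rw [Multiset.map_map] at hprod
  refine Multiset.map_injective (RCLike.ofReal_injective (K := 𝕜)) ?_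
  rw [Multiset.map_map, Multiset.map_map]
  exact hroots.symm.trans hprod

section RealSpectral

open scoped MatrixOrder

variable {n : Type*} [Fintype n] [DecidableEq n] {A : Matrix n n ℝ}

theorem PosSemidef.sqrt_eq_cfc (hA : A.PosSemidef) : hA.sqrt = cfc Real.sqrt A := by
  rw [hA.1.cfc_eq, IsHermitian.cfc, Unitary.conjStarAlgAut_apply]
  rfl

theorem PosDef.cfc_inv_eq (hA : A.PosDef) : cfc (·⁻¹ : ℝ → ℝ) A = A⁻¹ :=
  (cfc_ringInverse_id A hA.isUnit).trans A.nonsing_inv_eq_ringInverse.symm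

theorem PosDef.sqrt_mul_inv_mul_sqrt_transpose (hA : A.PosDef) :
    hA.posSemidef.sqrt * A⁻¹ * hA.posSemidef.sqrtᵀ = 1 := by
  have hsymm : (cfc Real.sqrt A)ᵀ = cfc Real.sqrt A := by
    simpa using (cfc_predicate Real.sqrt A).isHermitian.eq
  have hcont (f : ℝ → ℝ) : ContinuousOn f (spectrum ℝ A) := A.finite_real_spectrum.continuousOn f
  rw [hA.posSemidef.sqrt_eq_cfc, hsymm, ← hA.cfc_inv_eq, ← cfc_mul _ _ _ (hcont _) (hcont _),
    ← cfc_mul _ _ _ (hcont _) (hcont _), ← cfc_one ℝ A]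
  refine cfc_congr fun x hx => ?_
  have hx : 0 < x := hA.isStrictlyPositive.spectrum_pos hx
  simp [hx.ne', mul_right_comm _ x⁻¹, Real.mul_self_sqrt hx.le]

end RealSpectral

section SortedEigs

variable {k : ℕ} {M : Matrix (Fin k) (Fin k) ℝ}

theorem IsHermitian.sortedEigs_eq (hM : M.IsHermitian) :
    sortedEigs M = hM.eigenvalues ∘ Fin.revPerm.trans (Tuple.sort hM.eigenvalues) := by
  rw [sortedEigs, dif_pos hM]
  rfl

theorem IsHermitian.antitone_sortedEigs (hM : M.IsHermitian) : Antitone (sortedEigs M) := by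
  rw [hM.sortedEigs_eq]
  exact (Tuple.monotone_sort hM.eigenvalues).comp_antitone Fin.rev_anti

theorem IsHermitian.map_sortedEigs (hM : M.IsHermitian) :
    Multiset.map (sortedEigs M) univ.val = Multiset.map hM.eigenvalues univ.val := by
  rw [hM.sortedEigs_eq, ← Multiset.map_map, Multiset.map_univ_val_equiv]

theorem IsHermitian.sortedEigs_eq_of_antitone (hM : M.IsHermitian) {f : Fin k → ℝ}
    (hf : Antitone f) (h : Multiset.map hM.eigenvalues univ.val = Multiset.map f univ.val) :
    sortedEigs M = f := by
  rw [hM.sortedEigs_eq]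
  exact Tuple.comp_sort_rev_eq_of_antitone hf h

theorem PosDef.sortedEigs_pos (hM : M.PosDef) (i : Fin k) : 0 < sortedEigs M i := by
  rw [hM.1.sortedEigs_eq]
  exact hM.eigenvalues_pos _

theorem PosDef.sortedEigs_inv (hM : M.PosDef) :
    sortedEigs M⁻¹ = fun i => (sortedEigs M i.rev)⁻¹ := by
  refine hM.inv.1.sortedEigs_eq_of_antitone (fun i j hij => ?_) ?_
  · exact inv_anti₀ (hM.sortedEigs_pos _) (hM.1.antitone_sortedEigs (Fin.rev_le_rev.mpr hij))
  · rw [hM.1.map_eigenvalues_eq_map_cfc hM.inv.1 hM.cfc_inv_eq.symm, ← Multiset.map_map,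
      ← hM.1.map_sortedEigs, Multiset.map_map]
    conv_rhs => rw [← Multiset.map_univ_val_equiv Fin.revPerm, Multiset.map_map]
    simp

theorem PosDef.neg_sum_log_sortedEigs_inv (hM : M.PosDef) (s : ℕ) :
    -(∑ i : Fin k, if k - s ≤ (i : ℕ) then Real.log (sortedEigs M⁻¹ i) else 0) =
      ∑ i : Fin k, if (i : ℕ) < s then Real.log (sortedEigs M i) else 0 := by
  rw [hM.sortedEigs_inv, ← sum_neg_distrib, ← Equiv.sum_comp Fin.revPerm]
  refine sum_congr rfl fun i _ => ?_
  have hrev : k - s ≤ (i.rev : ℕ) ↔ (i : ℕ) < s := by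
    rw [Fin.val_rev]
    omega
  simp only [Fin.revPerm_apply, Fin.rev_rev, Real.log_inv, hrev]
  split_ifs <;> simp

end SortedEigs

end Matrix

theorem dFactFeasible_inv_sqrt {n m : ℕ} (A : Matrix (Fin m) (Fin n) ℝ)
    {C : Matrix (Fin n) (Fin n) ℝ} (hC : C.PosDef) :
    DFactFeasible A hC.posSemidef.sqrt C⁻¹ 0 0 0 1 :=
  ⟨hC.inv, fun _ => le_rfl, fun _ => le_rfl, fun _ => le_rfl,
    fun _ => by simp [hC.sqrt_mul_inv_mul_sqrt_transpose]⟩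

theorem dFactObj_zero_zero_one {n m k : ℕ} (s : ℕ) (b : Fin m → ℝ)
    (Θ : Matrix (Fin k) (Fin k) ℝ) :
    DFactObj s b Θ (0 : Fin n → ℝ) (0 : Fin m → ℝ) 1 =
      -(∑ i : Fin k, if k - s ≤ (i : ℕ) then Real.log (sortedEigs Θ i) else 0) := by
  simp [DFactObj]

theorem stmt_8_general {n m s : ℕ}
    (C : Matrix (Fin n) (Fin n) ℝ) (hC : C.PosDef)
    (A : Matrix (Fin m) (Fin n) ℝ) (b : Fin m → ℝ) :
    -- (C⁻¹, 0, 0, 0, 1) is DFact-feasible for (C, s, A, b; C^{1/2})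
    DFactFeasible A hC.posSemidef.sqrt C⁻¹ 0 0 0 1 ∧
    -- and its objective value equals the spectral bound:
    -- −Σ_{ℓ=n−s+1}^{n} log λ_ℓ(C⁻¹) = Σ_{ℓ=1}^{s} log λ_ℓ(C)
    (DFactObj s b C⁻¹ (0 : Fin n → ℝ) (0 : Fin m → ℝ) 1 =
      ∑ i : Fin n, if (i : ℕ) < s then Real.log (sortedEigs C i) else 0) ∧
    -(∑ i : Fin n, if n - s ≤ (i : ℕ) then Real.log (sortedEigs C⁻¹ i) else 0) =
      ∑ i : Fin n, if (i : ℕ) < s then Real.log (sortedEigs C i) else 0 := by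
  have hspectral := hC.neg_sum_log_sortedEigs_inv s
  exact ⟨dFactFeasible_inv_sqrt A hC, (dFactObj_zero_zero_one s b C⁻¹).trans hspectral, hspectral⟩

theorem stmt_8 {n m s : ℕ} (hn : 0 < n) (hm : 0 < m) (hs : 0 < s) (hsn : s ≤ n)
    (C : Matrix (Fin n) (Fin n) ℝ) (hC : C.PosDef)
    (A : Matrix (Fin m) (Fin n) ℝ) (b : Fin m → ℝ) :
    -- (C⁻¹, 0, 0, 0, 1) is DFact-feasible for (C, s, A, b; C^{1/2})
    DFactFeasible A hC.posSemidef.sqrt C⁻¹ 0 0 0 1 ∧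
    -- and its objective value equals the spectral bound:
    -- −Σ_{ℓ=n−s+1}^{n} log λ_ℓ(C⁻¹) = Σ_{ℓ=1}^{s} log λ_ℓ(C)
    (DFactObj s b C⁻¹ (0 : Fin n → ℝ) (0 : Fin m → ℝ) 1 =
      ∑ i : Fin n, if (i : ℕ) < s then Real.log (sortedEigs C i) else 0) ∧
    -(∑ i : Fin n, if n - s ≤ (i : ℕ) then Real.log (sortedEigs C⁻¹ i) else 0) =
      ∑ i : Fin n, if (i : ℕ) < s then Real.log (sortedEigs C i) else 0 :=
  stmt_8_general C hC A b
end

section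
/- Let C be an n×n real symmetric positive semidefinite matrix, γ > 0, and x̂ ∈ ℝⁿ such that K_γ(x̂) := γ·C·Diag(x̂)·C + Diag(𝟙 − x̂) is positive definite. Then for each coordinate j ∈ {1,…,n}, the real function t ↦ (1/2)·log det K_γ(x̂ + t·e_j) is differentiable at t = 0 with derivative (1/2)·(γ·(C·K_γ(x̂)⁻¹·C)_{jj} − (K_γ(x̂)⁻¹)_{jj}); that is, the gradient of the linx objective x ↦ (1/2)·log det K_γ(x) at x̂ is (1/2)·(diag(γ·C·K_γ(x̂)⁻¹·C) − diag(K_γ(x̂)⁻¹)). -/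
open Matrix

/-- The linx matrix `K_γ(y) = γ·C·Diag(y)·C + Diag(𝟙 − y)`. -/
noncomputable def linxK {n : ℕ} (C : Matrix (Fin n) (Fin n) ℝ) (γ : ℝ) (y : Fin n → ℝ) :
    Matrix (Fin n) (Fin n) ℝ :=
  γ • (C * Matrix.diagonal y * C) + Matrix.diagonal (fun i => 1 - y i)

lemma trace_mul_diag_single {n : ℕ} (A : Matrix (Fin n) (Fin n) ℝ) (j : Fin n) :
    (A * Matrix.diagonal (Pi.single j 1)).trace = A j j := by
  simp [Matrix.trace, Matrix.diag, Matrix.mul_apply, Matrix.diagonal_apply, Pi.single_apply,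
    mul_ite, Finset.sum_ite_eq]

/-- Gradient of the linx objective: if `K_γ(x̂) ≻ 0`, then for each `j` the map
`t ↦ (1/2)·log det K_γ(x̂ + t·e_j)` is differentiable at `0` with derivative
`(1/2)·(γ·(C·K_γ(x̂)⁻¹·C)_{jj} − (K_γ(x̂)⁻¹)_{jj})`. -/
theorem stmt_14 {n : ℕ} (C : Matrix (Fin n) (Fin n) ℝ) (hC : C.PosSemidef)
    (γ : ℝ) (hγ : 0 < γ) (x : Fin n → ℝ) (hK : (linxK C γ x).PosDef) (j : Fin n) :
    HasDerivAt
      (fun t : ℝ => (1 / 2) * Real.log (linxK C γ (x + t • (Pi.single j 1 : Fin n → ℝ))).det)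
      ((1 / 2) * (γ * (C * (linxK C γ x)⁻¹ * C) j j - (linxK C γ x)⁻¹ j j)) 0 := by
  set s : Fin n → ℝ := Pi.single j 1 with hs
  set K : Matrix (Fin n) (Fin n) ℝ := linxK C γ x with hKdef
  set M : Matrix (Fin n) (Fin n) ℝ :=
    γ • (C * Matrix.diagonal s * C) - Matrix.diagonal s with hM
  have hdet : 0 < K.det := hK.det_pos
  have hunit : IsUnit K.det := isUnit_iff_ne_zero.mpr hdet.ne'
  have hKinv : K * K⁻¹ = 1 := Matrix.mul_nonsing_inv K hunit
  have hlin : ∀ t : ℝ, linxK C γ (x + t • s) = K + t • M := by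
    intro t
    have h1 : Matrix.diagonal (x + t • s) =
        Matrix.diagonal x + t • Matrix.diagonal s := by
      ext i k
      by_cases h : i = k <;> simp [Matrix.diagonal_apply, h]
    have h2 : (fun i => 1 - (x + t • s) i) = (fun i => 1 - x i) - t • s := by
      funext i; simp [Pi.smul_apply]; ring
    have h3 : Matrix.diagonal ((fun i => 1 - x i) - t • s) =
        Matrix.diagonal (fun i => 1 - x i) - t • Matrix.diagonal s := by
      ext i k
      by_cases h : i = k <;> simp [Matrix.diagonal_apply, h]
    rw [linxK, h2, h1, h3, hKdef, linxK, hM]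
    rw [Matrix.mul_add, Matrix.add_mul, Matrix.mul_smul, Matrix.smul_mul]
    module
  set A : Matrix (Fin n) (Fin n) ℝ := K⁻¹ * M with hA
  set q : Polynomial ℝ :=
    (Matrix.det (1 + (Polynomial.X : Polynomial ℝ) • A.map Polynomial.C)).divX.divX with hq
  have hfactor : ∀ t : ℝ, K + t • M = K * (1 + t • A) := by
    intro t
    rw [Matrix.mul_add, Matrix.mul_one, Matrix.mul_smul, hA, ← Matrix.mul_assoc, hKinv, one_mul]
  have hdet_eq : ∀ t : ℝ, (linxK C γ (x + t • s)).det
      = K.det * (1 + A.trace * t + q.eval t * t ^ 2) := by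
    intro t
    rw [hlin t, hfactor t, Matrix.det_mul, Matrix.det_one_add_smul t A]
  have hqd := q.hasDerivAt (0 : ℝ)
  have hsq : HasDerivAt (fun t : ℝ => t ^ 2) 0 (0 : ℝ) := by
    simpa using hasDerivAt_pow 2 (0 : ℝ)
  have h1 : HasDerivAt (fun t : ℝ => 1 + A.trace * t + q.eval t * t ^ 2) A.trace 0 := by
    have := (((hasDerivAt_id (0 : ℝ)).const_mul A.trace).const_add 1).add (hqd.mul hsq)
    refine this.congr_deriv ?_
    simp
  have hf : HasDerivAt (fun t : ℝ => (linxK C γ (x + t • s)).det) (K.det * A.trace) 0 := by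
    have heq : (fun t : ℝ => (linxK C γ (x + t • s)).det)
        = fun t : ℝ => K.det * (1 + A.trace * t + q.eval t * t ^ 2) := funext hdet_eq
    rw [heq]
    exact h1.const_mul K.det
  have h0 : x + (0 : ℝ) • s = x := by simp
  have hne : (linxK C γ (x + (0 : ℝ) • s)).det ≠ 0 := by
    rw [h0]; exact hdet.ne'
  have final := (hf.log hne).const_mul (1 / 2 : ℝ)
  rw [h0] at final
  have hcancel : K.det * A.trace / K.det = A.trace := by
    rw [mul_comm, mul_div_assoc, div_self hdet.ne', mul_one]
  have htr : A.trace = γ * (C * K⁻¹ * C) j j - K⁻¹ j j := by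
    have e1 : A = γ • (K⁻¹ * (C * Matrix.diagonal s * C)) - K⁻¹ * Matrix.diagonal s := by
      rw [hA, hM, Matrix.mul_sub, Matrix.mul_smul]
    have e2 : K⁻¹ * (C * Matrix.diagonal s * C) = (K⁻¹ * (C * Matrix.diagonal s)) * C := by
      simp [Matrix.mul_assoc]
    have e3 : C * (K⁻¹ * (C * Matrix.diagonal s)) = (C * K⁻¹ * C) * Matrix.diagonal s := by
      simp [Matrix.mul_assoc]
    rw [e1, Matrix.trace_sub, Matrix.trace_smul, e2, Matrix.trace_mul_comm, e3,
      trace_mul_diag_single, trace_mul_diag_single, smul_eq_mul]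
  rw [hcancel, htr] at final
  exact final
end

section
/- Consider a mixing of m relaxations of CMESP: for i = 1,…,m let k_i be a positive integer, L_{i0}, L_{i1}, …, L_{in} be k_i×k_i real symmetric matrices defining the affine map L_i(x) := L_{i0} + Σ_{j=1}^{n} x_j·L_{ij}, and f_i be a real-valued function on k_i×k_i real symmetric positive semidefinite matrices. Let α ∈ ℝᵐ with α ≥ 0 and Σ_i α_i = 1, and assume that for every CMESP-feasible binary vector x, each L_i(x) is positive semidefinite and log det C[S(x), S(x)] ≤ Σ_{i=1}^{m} α_i·f_i(L_i(x)) (the mixing is a valid relaxation). Suppose given, for each i, a k_i×k_i real symmetric positive definite matrix Θ̂_i and reals ω_i, ρ_i such that f_i(W) ≤ ω_i − ρ_i + Θ̂_i ∙ W for every k_i×k_i symmetric positive semidefinite W, and given υ̂, ν̂ ∈ ℝⁿ with υ̂, ν̂ ≥ 0, π̂ ∈ ℝᵐ with π̂ ≥ 0, and τ̂ ∈ ℝ satisfying, for each j ∈ {1,…,n}, Σ_{i=1}^{m} α_i·(Θ̂_i ∙ L_{ij}) + υ̂_j − ν̂_j − π̂ᵀA_{·j} − τ̂ = 0. Set ζ̂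 := Σ_{i=1}^{m} α_i·(ω_i − ρ_i + Θ̂_i ∙ L_{i0}) + ν̂ᵀ𝟙 + π̂ᵀb + τ̂·s. Then: (i) every CMESP-feasible binary vector x with x_j = 1 satisfies det C[S(x), S(x)] ≤ exp(ζ̂ − υ̂_j); (ii) every CMESP-feasible binary vector x with x_j = 0 satisfies det C[S(x), S(x)] ≤ exp(ζ̂ − ν̂_j). Consequently, if LB := log det C[S(x₀), S(x₀)] for some CMESP-feasible binary x₀ with det C[S(x₀), S(x₀)] > 0 and x* is an optimal solution of CMESP, then ζ̂ − LB < υ̂_j implies x*_j = 0, and ζ̂ − LB < ν̂_j implies x*_j = 1. -/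
open Matrix

/-- The matrix dot-product `M ∙ N = Trace(Mᵀ·N)`. -/
noncomputable def mdot {k : ℕ} (M N : Matrix (Fin k) (Fin k) ℝ) : ℝ :=
  (Mᵀ * N).trace

lemma mdot_expand {kk nn : ℕ} (M L0' : Matrix (Fin kk) (Fin kk) ℝ) (x : Fin nn → ℝ)
    (L' : Fin nn → Matrix (Fin kk) (Fin kk) ℝ) :
    mdot M (L0' + ∑ j, x j • L' j) = mdot M L0' + ∑ j, x j * mdot M (L' j) := by
  simp [mdot, Matrix.mul_add, Matrix.mul_sum, Matrix.mul_smul, Matrix.trace_add,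
    Matrix.trace_sum, Matrix.trace_smul, smul_eq_mul]

lemma psd_det_nonneg {N : Type*} [Fintype N] [DecidableEq N] {M : Matrix N N ℝ}
    (h : M.PosSemidef) : 0 ≤ M.det := by
  exact h.det_nonneg

theorem stmt_17 {n m s : ℕ} (hn : 0 < n) (hm : 0 < m) (hs : 0 < s)
    (C : Matrix (Fin n) (Fin n) ℝ) (hC : C.PosSemidef)
    (A : Matrix (Fin m) (Fin n) ℝ) (b : Fin m → ℝ)
    -- the data of the m relaxations being mixed
    (k : Fin m → ℕ)
    (L0 : (i : Fin m) → Matrix (Fin (k i)) (Fin (k i)) ℝ)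
    (L : (i : Fin m) → Fin n → Matrix (Fin (k i)) (Fin (k i)) ℝ)
    (hL0symm : ∀ i, (L0 i).IsSymm) (hLsymm : ∀ i j, (L i j).IsSymm)
    (f : (i : Fin m) → Matrix (Fin (k i)) (Fin (k i)) ℝ → ℝ)
    -- the weight vector α ≥ 0, Σ α = 1
    (α : Fin m → ℝ) (hα : ∀ i, 0 ≤ α i) (hα1 : ∑ i, α i = 1)
    -- the mixing is a valid relaxation
    (hvalid : ∀ x : Fin n → ℝ, CMESPFeasible s A b x →
        (∀ i, (L0 i + ∑ j, x j • L i j).PosSemidef) ∧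
        Real.log (suppDet C x) ≤ ∑ i, α i * f i (L0 i + ∑ j, x j • L i j))
    -- the dual data: Θ̂_i ≻ 0 with f_i(W) ≤ ω_i − ρ_i + Θ̂_i ∙ W for all W ⪰ 0
    (Θ : (i : Fin m) → Matrix (Fin (k i)) (Fin (k i)) ℝ) (hΘ : ∀ i, (Θ i).PosDef)
    (ω ρ : Fin m → ℝ)
    (hbound : ∀ i, ∀ W : Matrix (Fin (k i)) (Fin (k i)) ℝ, W.PosSemidef →
        f i W ≤ ω i - ρ i + mdot (Θ i) W)
    -- the dual multipliers υ̂, ν̂ ≥ 0, π̂ ≥ 0, τ̂, satisfying the stationarity equations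
    (υ ν : Fin n → ℝ) (hυ : ∀ j, 0 ≤ υ j) (hν : ∀ j, 0 ≤ ν j)
    (π : Fin m → ℝ) (hπ : ∀ i, 0 ≤ π i) (τ : ℝ)
    (hstat : ∀ j : Fin n,
        (∑ i, α i * mdot (Θ i) (L i j)) + υ j - ν j - (∑ i, π i * A i j) - τ = 0)
    -- ζ̂
    (ζ : ℝ)
    (hζ : ζ = (∑ i, α i * (ω i - ρ i + mdot (Θ i) (L0 i))) +
        (∑ j, ν j) + (∑ i, π i * b i) + τ * s) :
    -- (i) and (ii)
    (∀ x : Fin n → ℝ, CMESPFeasible s A b x → ∀ j : Fin n,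
        (x j = 1 → suppDet C x ≤ Real.exp (ζ - υ j)) ∧
        (x j = 0 → suppDet C x ≤ Real.exp (ζ - ν j))) ∧
    -- consequently, the variable-fixing rules hold
    (∀ x₀ : Fin n → ℝ, CMESPFeasible s A b x₀ → 0 < suppDet C x₀ →
      ∀ xstar : Fin n → ℝ, CMESPFeasible s A b xstar →
        (∀ x : Fin n → ℝ, CMESPFeasible s A b x → suppDet C x ≤ suppDet C xstar) →
        ∀ j : Fin n,
          (ζ - Real.log (suppDet C x₀) < υ j → xstar j = 0) ∧
          (ζ - Real.log (suppDet C x₀) < ν j → xstar j = 1)) := by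
  have hSd : ∀ x : Fin n → ℝ, 0 ≤ suppDet C x := by
    intro x
    unfold suppDet
    exact psd_det_nonneg (hC.submatrix _)
  -- the key dual bound
  have key : ∀ x : Fin n → ℝ, CMESPFeasible s A b x →
      Real.log (suppDet C x) ≤ ζ + ((∑ j, x j * ν j) - ∑ j, ν j) - ∑ j, x j * υ j := by
    intro x hx
    obtain ⟨hx01, hxsum, hxA⟩ := hx
    obtain ⟨hpsd, hlog⟩ := hvalid x ⟨hx01, hxsum, hxA⟩
    have h1 : Real.log (suppDet C x)
        ≤ ∑ i, α i * (ω i - ρ i + mdot (Θ i) (L0 i + ∑ j, x j • L i j)) :=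
      hlog.trans (Finset.sum_le_sum fun i _ =>
        mul_le_mul_of_nonneg_left (hbound i _ (hpsd i)) (hα i))
    have h2 : ∑ i, α i * (ω i - ρ i + mdot (Θ i) (L0 i + ∑ j, x j • L i j))
        = (∑ i, α i * (ω i - ρ i + mdot (Θ i) (L0 i)))
          + ∑ j, x j * (∑ i, α i * mdot (Θ i) (L i j)) := by
      have expand : ∀ i : Fin m,
          α i * (ω i - ρ i + mdot (Θ i) (L0 i + ∑ j, x j • L i j))
          = α i * (ω i - ρ i + mdot (Θ i) (L0 i))
            + ∑ j, x j * (α i * mdot (Θ i) (L i j)) := by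
        intro i
        rw [mdot_expand, show α i * (ω i - ρ i + (mdot (Θ i) (L0 i)
            + ∑ j, x j * mdot (Θ i) (L i j)))
            = α i * (ω i - ρ i + mdot (Θ i) (L0 i))
              + α i * ∑ j, x j * mdot (Θ i) (L i j) from by ring, Finset.mul_sum]
        congr 1
        exact Finset.sum_congr rfl fun j _ => by ring
      rw [Finset.sum_congr rfl fun i _ => expand i, Finset.sum_add_distrib]
      congr 1
      rw [Finset.sum_comm]
      exact Finset.sum_congr rfl fun j _ => by rw [Finset.mul_sum]
    have h3 : ∀ j : Fin n, (∑ i, α i * mdot (Θ i) (L i j))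
        = ν j - υ j + ((∑ i, π i * A i j) + τ) := by
      intro j; have := hstat j; linarith
    have h4 : (∑ j, x j * (ν j - υ j + ((∑ i, π i * A i j) + τ)))
        = ((∑ j, x j * ν j) - (∑ j, x j * υ j))
          + ((∑ i, π i * A.mulVec x i) + τ * s) := by
      have e1 : ∀ j : Fin n, x j * (ν j - υ j + ((∑ i, π i * A i j) + τ))
          = (x j * ν j - x j * υ j) + ((∑ i, x j * (π i * A i j)) + τ * x j) := by
        intro j
        rw [show x j * (ν j - υ j + ((∑ i, π i * A i j) + τ))
            = (x j * ν j - x j * υ j) + (x j * (∑ i, π i * A i j) + τ * x j) from by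
          ring, Finset.mul_sum]
      rw [Finset.sum_congr rfl fun j _ => e1 j, Finset.sum_add_distrib,
        Finset.sum_sub_distrib, Finset.sum_add_distrib, Finset.sum_comm,
        ← Finset.mul_sum, hxsum]
      congr 2
      refine Finset.sum_congr rfl fun i _ => ?_
      rw [Matrix.mulVec, dotProduct, Finset.mul_sum]
      exact Finset.sum_congr rfl fun j _ => by ring
    have h5 : (∑ i, π i * A.mulVec x i) ≤ ∑ i, π i * b i :=
      Finset.sum_le_sum fun i _ => mul_le_mul_of_nonneg_left (hxA i) (hπ i)
    have h3' : ∑ j, x j * (∑ i, α i * mdot (Θ i) (L i j))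
        = ∑ j, x j * (ν j - υ j + ((∑ i, π i * A i j) + τ)) :=
      Finset.sum_congr rfl fun j _ => by rw [h3 j]
    have h6 : Real.log (suppDet C x)
        ≤ (∑ i, α i * (ω i - ρ i + mdot (Θ i) (L0 i)))
          + (((∑ j, x j * ν j) - (∑ j, x j * υ j))
            + ((∑ i, π i * A.mulVec x i) + τ * s)) :=
      h1.trans_eq (h2.trans (by rw [h3', h4]))
    rw [hζ]; linarith
  -- part (i)
  have parti : ∀ x : Fin n → ℝ, CMESPFeasible s A b x → ∀ j : Fin n,
      (x j = 1 → suppDet C x ≤ Real.exp (ζ - υ j)) ∧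
      (x j = 0 → suppDet C x ≤ Real.exp (ζ - ν j)) := by
    intro x hx j
    have hk := key x hx
    have hνsum : ∑ j', x j' * ν j' ≤ ∑ j', ν j' :=
      Finset.sum_le_sum fun j' _ => by
        rcases hx.1 j' with h | h <;> simp [h, hν j']
    have hυnn : 0 ≤ ∑ j', x j' * υ j' :=
      Finset.sum_nonneg fun j' _ => by
        rcases hx.1 j' with h | h <;> simp [h, hυ j']
    have conclude : ∀ c : ℝ, Real.log (suppDet C x) ≤ c →
        suppDet C x ≤ Real.exp c := by
      intro c hc
      rcases (hSd x).lt_or_eq with h | h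
      · exact (Real.log_le_iff_le_exp h).mp hc
      · rw [← h]; exact (Real.exp_pos _).le
    constructor
    · intro hxj1
      refine conclude _ ?_
      have hυsum : υ j ≤ ∑ j', x j' * υ j' := by
        have := Finset.single_le_sum (f := fun j' => x j' * υ j')
          (fun j' _ => by rcases hx.1 j' with h | h <;> simp [h, hυ j'])
          (Finset.mem_univ j)
        simpa [hxj1] using this
      linarith
    · intro hxj0
      refine conclude _ ?_
      have hνj : ν j ≤ ∑ j', (ν j' - x j' * ν j') := by
        have := Finset.single_le_sum (f := fun j' => ν j' - x j' * ν j')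
          (fun j' _ => by
            rcases hx.1 j' with h | h <;> simp [h, hν j'])
          (Finset.mem_univ j)
        simpa [hxj0] using this
      rw [Finset.sum_sub_distrib] at hνj
      linarith
  refine ⟨parti, ?_⟩
  intro x₀ hx₀ hd₀ xs hxs hopt j
  have hopt₀ : suppDet C x₀ ≤ suppDet C xs := hopt x₀ hx₀
  constructor
  · intro hlt
    rcases hxs.1 j with h | h
    · exact h
    · exfalso
      have h1 : suppDet C xs ≤ Real.exp (ζ - υ j) := (parti xs hxs j).1 h
      have h2 : Real.log (suppDet C x₀) ≤ ζ - υ j :=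
        (Real.log_le_iff_le_exp hd₀).mpr (hopt₀.trans h1)
      linarith
  · intro hlt
    rcases hxs.1 j with h | h
    · exfalso
      have h1 : suppDet C xs ≤ Real.exp (ζ - ν j) := (parti xs hxs j).2 h
      have h2 : Real.log (suppDet C x₀) ≤ ζ - ν j :=
        (Real.log_le_iff_le_exp hd₀).mpr (hopt₀.trans h1)
      linarith
    · exact h
end
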